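/- arXiv:1008.2729 — 4 statements merged into one kernel-verified Lean document; each statement's English description precedes it below -/
import Mathlib

section
/- For any natural number k and any 2×k matrices P and Q over 𝔽₂, the quotient of 𝔽₂⁴ by the range of the linear map given by the block matrix Δ = [[P, I₂],[Q, I₂]] has dimension 2 − rank(P + Q). (Attaching a wire increases the dimension of H¹ by 2, 1, or 0 according to complete feedback, partial feedback, or no feedback.) -/
/-- The field with two elements. -/
notation "𝔽₂" => ZMod 2

/-!
The difference map `(x, y) ↦ x - y` from `Rᵐ × Rᵐ`, followed by the projection onto
`Rᵐ ⧸ range (P - Q)`, is surjective and its kernel is exactly `range Δ`: a pair `(x, y)` equals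
`(P u + w, Q u + w)` for some `u, w` iff `x - y = (P - Q) u` (take `w = y - Q u`). Hence
`coker Δ ≅ coker (P - Q)`, of dimension `m - rank (P - Q)`; in characteristic two `P - Q = P + Q`.
-/

namespace Matrix

section CommRing

variable {R m n : Type*} [CommRing R]

def sumDiff (R m : Type*) [CommRing R] : (m ⊕ m → R) →ₗ[R] (m → R) :=
  LinearMap.funLeft R R Sum.inl - LinearMap.funLeft R R Sum.inr

theorem sumDiff_apply (v : m ⊕ m → R) (i : m) : sumDiff R m v i = v (.inl i) - v (.inr i) :=
  rfl

theorem sumDiff_surjective : Function.Surjective (sumDiff R m) :=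
  fun x => ⟨Sum.elim x 0, by ext i; simp [sumDiff_apply]⟩

variable [Fintype m] [DecidableEq m] [Fintype n]

theorem range_fromBlocks_one_one_eq_ker (A B : Matrix m n R) :
    LinearMap.range (fromBlocks A (1 : Matrix m m R) B 1).mulVecLin =
      LinearMap.ker ((LinearMap.range (A - B).mulVecLin).mkQ ∘ₗ sumDiff R m) := by
  ext v
  simp only [LinearMap.mem_ker, LinearMap.comp_apply, Submodule.mkQ_apply,
    Submodule.Quotient.mk_eq_zero, LinearMap.mem_range, mulVecLin_apply]
  constructor
  · rintro ⟨w, rfl⟩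
    refine ⟨w ∘ Sum.inl, ?_⟩
    ext i
    simp [sumDiff_apply, fromBlocks_mulVec, sub_mulVec]
  · rintro ⟨u, hu⟩
    refine ⟨Sum.elim u (v ∘ Sum.inr - B *ᵥ u), ?_⟩
    ext (i | i)
    · have hi := congrFun hu i
      simp only [sub_mulVec, Pi.sub_apply, sumDiff_apply] at hi
      simp only [fromBlocks_mulVec, Sum.elim_inl, Sum.elim_comp_inl, Sum.elim_comp_inr,
        one_mulVec, Pi.add_apply, Pi.sub_apply, Function.comp_apply]
      linear_combination hi
    · simp [fromBlocks_mulVec]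

noncomputable def quotRangeFromBlocksOneOneEquiv (A B : Matrix m n R) :
    ((m ⊕ m → R) ⧸ LinearMap.range (fromBlocks A (1 : Matrix m m R) B 1).mulVecLin) ≃ₗ[R]
      ((m → R) ⧸ LinearMap.range (A - B).mulVecLin) :=
  (Submodule.quotEquivOfEq _ _ (range_fromBlocks_one_one_eq_ker A B)).trans
    (LinearMap.quotKerEquivOfSurjective _
      ((Submodule.mkQ_surjective _).comp sumDiff_surjective))

end CommRing

theorem finrank_quotient_range_fromBlocks_one_one {K m n : Type*} [Field K] [Fintype m]
    [DecidableEq m] [Fintype n] (A B : Matrix m n K) :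
    Module.finrank K
        ((m ⊕ m → K) ⧸ LinearMap.range (fromBlocks A (1 : Matrix m m K) B 1).mulVecLin) =
      Fintype.card m - (A - B).rank := by
  rw [(quotRangeFromBlocksOneOneEquiv A B).finrank_eq, Submodule.finrank_quotient,
    Module.finrank_fintype_fun_eq_card]
  rfl

end Matrix

/-- for any `k` and any 2×k matrices `P, Q` over `𝔽₂`, the
quotient of `𝔽₂⁴` by the range of the linear map given by the Mayer–Vietoris
block matrix `Δ = [[P, I₂],[Q, I₂]]` has dimension `2 - rank (P + Q)`. -/
theorem coker_MV_difference_matrix (k : ℕ)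
    (P Q : Matrix (Fin 2) (Fin k) 𝔽₂) :
    Module.finrank 𝔽₂
        ((Fin 2 ⊕ Fin 2 → 𝔽₂) ⧸
          LinearMap.range (Matrix.fromBlocks P (1 : Matrix (Fin 2) (Fin 2) 𝔽₂)
            Q (1 : Matrix (Fin 2) (Fin 2) 𝔽₂)).mulVecLin) =
      2 - (P + Q).rank := by
  have hsub : P - Q = P + Q := by
    ext i j
    exact CharTwo.sub_eq_add (P i j) (Q i j)
  rw [Matrix.finrank_quotient_range_fromBlocks_one_one, hsub, Fintype.card_fin]
end

section
/- The 6×8 matrix M over 𝔽₂ with rows (1,0,1,0,0,0,0,0), (0,1,0,1,0,0,0,0), (1,0,0,0,1,1,0,0), (0,1,0,0,0,0,1,1), (0,0,0,1,1,0,1,0), (0,0,1,0,0,1,0,1) has rank 5. (Consequently the Čech complex of the switching sheaf of the combinational circuit with a shared input has H⁰ of dimension 3 and H¹ of dimension 1; in particular H¹ is nontrivial, detecting the two separate signal paths for the shared input.) -/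
/-- The Čech coboundary matrix `d⁰` of the switching sheaf of the combinational
circuit with a shared input. -/
def sharedInputCoboundary : Matrix (Fin 6) (Fin 8) 𝔽₂ :=
  !![1,0,1,0,0,0,0,0;
     0,1,0,1,0,0,0,0;
     1,0,0,0,1,1,0,0;
     0,1,0,0,0,0,1,1;
     0,0,0,1,1,0,1,0;
     0,0,1,0,0,1,0,1]

namespace Matrix

variable {m n K : Type*} [Fintype n] [Field K]

theorem rank_lt_card_height_of_vecMul_eq_zero [Fintype m] (A : Matrix m n K) {v : m → K}
    (hv : v ≠ 0) (hvA : v ᵥ* A = 0) : A.rank < Fintype.card m := by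
  have hker : 0 < Module.finrank K (LinearMap.ker Aᵀ.mulVecLin) :=
    Module.finrank_pos_iff_exists_ne_zero.mpr
      ⟨⟨v, by rwa [LinearMap.mem_ker, mulVecLin_apply, mulVec_transpose]⟩, by simpa using hv⟩
  rw [← rank_transpose, rank, ← Module.finrank_fintype_fun_eq_card (R := K),
    ← LinearMap.finrank_range_add_finrank_ker Aᵀ.mulVecLin]
  omega

theorem card_le_rank_of_det_submatrix_ne_zero {k : Type*} [Fintype k] [DecidableEq k]
    (A : Matrix m n K) (r : k → m) (c : k → n) (h : (A.submatrix r c).det ≠ 0) :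
    Fintype.card k ≤ A.rank := by
  rw [← rank_of_isUnit _ ((isUnit_iff_isUnit_det _).mpr h.isUnit)]
  exact rank_submatrix_le A r c

end Matrix

/-- the 6×8 Čech coboundary matrix of the switching sheaf of the
shared-input combinational circuit has rank 5 (so `H⁰` has dimension 3 and `H¹`
has dimension 1). -/
theorem sharedInputCoboundary_rank : sharedInputCoboundary.rank = 5 := by
  -- Every column has exactly two nonzero entries, so the rows sum to zero.
  have upper : sharedInputCoboundary.rank < 6 :=
    sharedInputCoboundary.rank_lt_card_height_of_vecMul_eq_zero one_ne_zero (by decide)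
  -- On these rows and columns the submatrix is lower unitriangular.
  have lower : 5 ≤ sharedInputCoboundary.rank :=
    sharedInputCoboundary.card_le_rank_of_det_submatrix_ne_zero ![0, 1, 2, 4, 3] ![2, 3, 5, 6, 7]
      (by set_option maxRecDepth 10000 in decide)
  omega
end

section
/- Let M be the 6×8 matrix over 𝔽₂ with rows (1,0,1,0,0,0,0,0), (0,1,0,1,0,0,0,0), (1,0,0,0,1,1,0,0), (0,1,0,0,0,0,1,1), (0,0,0,1,1,0,1,0), (0,0,1,0,0,1,0,1). The vector v₃ = (1,1,1,1,1,0,0,1) lies in the kernel of the linear map 𝔽₂⁸ → 𝔽₂⁶ determined by M, but v₃ is not in the 𝔽₂-linear span of v₁ = (1,0,1,0,0,1,0,0) and v₂ = (0,1,0,1,0,0,1,0). (The circuit has exactly two quiescent logic states, whose lifts are v₁ and v₂; hence H⁰ of the switching sheaf contains a global section that is neither a lifted quiescent logic state nor a linear combination of them. This witnesses the theorem that the cohomology of a switching sheaf over a logic circuit contains different information than the set of its quiescent logic states.) -/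
theorem Submodule.notMem_span_of_apply_eq_zero {R M N : Type*} [Semiring R] [AddCommMonoid M]
    [AddCommMonoid N] [Module R M] [Module R N] (f : M →ₗ[R] N) {s : Set M} {x : M}
    (hs : ∀ v ∈ s, f v = 0) (hx : f x ≠ 0) : x ∉ Submodule.span R s :=
  fun hmem => hx (Submodule.span_le (p := LinearMap.ker f) |>.2 hs hmem)

/-- the vector `v₃ = (1,1,1,1,1,0,0,1)` lies in the kernel of the
linear map `𝔽₂⁸ → 𝔽₂⁶` given by the Čech coboundary matrix of the shared-input
circuit, but it is not in the `𝔽₂`-linear span of the two lifted quiescent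
logic states `v₁ = (1,0,1,0,0,1,0,0)` and `v₂ = (0,1,0,1,0,0,1,0)`:
`H⁰` contains strictly more than the lifted quiescent logic states. -/
theorem sharedInput_H0_exceeds_QLS :
    sharedInputCoboundary.mulVecLin ![1,1,1,1,1,0,0,1] = 0 ∧
      ![1,1,1,1,1,0,0,1] ∉
        Submodule.span 𝔽₂
          ({![1,0,1,0,0,1,0,0], ![0,1,0,1,0,0,1,0]} : Set (Fin 8 → 𝔽₂)) := by
  refine ⟨by decide, ?_⟩
  -- the coordinate `d̄ ⊗ ē` vanishes on both quiescent states but not on `v₃`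
  refine Submodule.notMem_span_of_apply_eq_zero (LinearMap.proj 4) ?_ (by decide)
  simp only [Set.mem_insert_iff, Set.mem_singleton_iff]
  rintro v (rfl | rfl) <;> rfl
end

section
/- Let P and Q be the 2×8 matrices over 𝔽₂ with P = [[1,0,1,0,1,0,1,0],[0,1,0,1,0,1,0,1]] and Q = [[0,0,0,0,1,1,1,0],[1,1,1,1,0,0,0,1]], and let Δ = [[P, I₂],[Q, I₂]] be the corresponding 4×10 block matrix. Then the kernel of the linear map 𝔽₂¹⁰ → 𝔽₂⁴ determined by Δ has dimension 7, and the quotient of 𝔽₂⁴ by its range has dimension 1. (H⁰ of the switching sheaf of the R-S flip-flop has dimension 7 and H¹ has dimension 1.) -/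
/-- The restriction matrix `P` of the R-S flip-flop: restriction from `H⁰(A)` to
the input that the feedback wire connects. -/
def rsP : Matrix (Fin 2) (Fin 8) 𝔽₂ :=
  !![1,0,1,0,1,0,1,0;
     0,1,0,1,0,1,0,1]

/-- The restriction matrix `Q` of the R-S flip-flop: restriction from `H⁰(A)` to
the output that the feedback wire connects. -/
def rsQ : Matrix (Fin 2) (Fin 8) 𝔽₂ :=
  !![0,0,0,0,1,1,1,0;
     1,1,1,1,0,0,0,1]

/-- The 4×10 Mayer–Vietoris difference matrix `Δ = [[P, I₂],[Q, I₂]]` of the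
R-S flip-flop. -/
def rsDelta : Matrix (Fin 2 ⊕ Fin 2) (Fin 8 ⊕ Fin 2) 𝔽₂ :=
  Matrix.fromBlocks rsP (1 : Matrix (Fin 2) (Fin 2) 𝔽₂)
    rsQ (1 : Matrix (Fin 2) (Fin 2) 𝔽₂)

/-! Every column of `Δ` has an even number of ones, so the range of `Δ` lies in the hyperplane
of `𝔽₂⁴` where the coordinates sum to zero; three independent columns show that it is the
whole hyperplane. Hence `Δ` has rank 3, and rank–nullity gives `7 = 10 - 3` and `1 = 4 - 3`. -/

open Module LinearMap Matrix

section CoordSum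

variable {ι : Type*} [Fintype ι]

def coordSum (R : Type*) [CommSemiring R] : (ι → R) →ₗ[R] R where
  toFun v := ∑ i, v i
  map_add' _ _ := Finset.sum_add_distrib
  map_smul' _ _ := (Finset.mul_sum _ _ _).symm

@[simp]
theorem coordSum_apply {R : Type*} [CommSemiring R] (v : ι → R) : coordSum R v = ∑ i, v i :=
  rfl

theorem coordSum_surjective {R : Type*} [CommSemiring R] [Nonempty ι] :
    Function.Surjective (coordSum (ι := ι) R) := by
  classical
  exact fun c => ⟨Pi.single (Classical.arbitrary ι) c, by simp⟩

variable {K : Type*} [Field K] [Nonempty ι]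

theorem finrank_ker_coordSum : finrank K (ker (coordSum (ι := ι) K)) = Fintype.card ι - 1 := by
  have h := (coordSum (ι := ι) K).finrank_range_add_finrank_ker
  rw [range_eq_top.2 coordSum_surjective, finrank_top, finrank_self, finrank_fintype_fun_eq_card]
    at h
  omega

theorem finrank_quotient_ker_coordSum : finrank K ((ι → K) ⧸ ker (coordSum (ι := ι) K)) = 1 :=
  ((coordSum K).quotKerEquivOfSurjective coordSum_surjective).finrank_eq.trans (finrank_self K)

end CoordSum

namespace Matrix

variable {m n : Type*} [Fintype m] [Fintype n]

theorem coordSum_mulVec {R : Type*} [CommSemiring R] (A : Matrix m n R) (x : n → R) :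
    coordSum R (A *ᵥ x) = (1 ᵥ* A) ⬝ᵥ x := by
  rw [← dotProduct_mulVec, coordSum_apply, one_dotProduct]

theorem range_mulVecLin_le_ker_coordSum {R : Type*} [CommSemiring R] {A : Matrix m n R}
    (hA : 1 ᵥ* A = 0) : range A.mulVecLin ≤ ker (coordSum R) := by
  rintro _ ⟨x, rfl⟩
  rw [mem_ker, mulVecLin_apply, coordSum_mulVec, hA, zero_dotProduct]

theorem card_le_finrank_range_mulVecLin {K : Type*} [Field K] (A : Matrix m n K) {κ : Type*}
    [Fintype κ] {c : κ → n} (hc : LinearIndependent K (A.col ∘ c)) :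
    Fintype.card κ ≤ finrank K (range A.mulVecLin) :=
  calc Fintype.card κ ≤ finrank K (Submodule.span K (Set.range (A.col ∘ c))) :=
        linearIndependent_iff_card_le_finrank_span.1 hc
    _ ≤ finrank K (range A.mulVecLin) := by
        rw [range_mulVecLin]
        exact Submodule.finrank_mono (Submodule.span_mono (Set.range_comp_subset_range _ _))

end Matrix

theorem one_vecMul_rsDelta : 1 ᵥ* rsDelta = 0 :=
  funext <| by decide

theorem linearIndependent_rsDelta_col :
    LinearIndependent 𝔽₂ (rsDelta.col ∘ ![Sum.inl 0, Sum.inr 0, Sum.inr 1]) := by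
  rw [Fintype.linearIndependent_iff]
  decide

theorem range_rsDelta_mulVecLin : range rsDelta.mulVecLin = ker (coordSum 𝔽₂) := by
  refine Submodule.eq_of_le_of_finrank_le
    (range_mulVecLin_le_ker_coordSum one_vecMul_rsDelta) ?_
  rw [finrank_ker_coordSum]
  simpa using rsDelta.card_le_finrank_range_mulVecLin linearIndependent_rsDelta_col

/-- the kernel of the linear map `𝔽₂¹⁰ → 𝔽₂⁴` determined by the
Mayer–Vietoris matrix `Δ` of the R-S flip-flop has dimension 7, and the
quotient of `𝔽₂⁴` by its range has dimension 1 (so `H⁰` has dimension 7 and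
`H¹` has dimension 1). -/
theorem rs_flipflop_H0_H1 :
    Module.finrank 𝔽₂ (LinearMap.ker rsDelta.mulVecLin) = 7 ∧
      Module.finrank 𝔽₂
        ((Fin 2 ⊕ Fin 2 → 𝔽₂) ⧸ LinearMap.range rsDelta.mulVecLin) = 1 := by
  have hker := rsDelta.mulVecLin.finrank_range_add_finrank_ker
  rw [range_rsDelta_mulVecLin, finrank_ker_coordSum, finrank_fintype_fun_eq_card] at hker
  refine ⟨?_, ?_⟩
  · simp only [Fintype.card_sum, Fintype.card_fin] at hker
    omega
  · rw [range_rsDelta_mulVecLin]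
    exact finrank_quotient_ker_coordSum
end
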